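/- For positive integers N₁, …, N_{2q}, define N₀ = 1 and let the physical array be the union over i = 1,…,2q−1 of the sets { n·∏_{k=0}^{i−1} N_k : n = 1,…,N_i − 1 } together with { n·∏_{k=0}^{2q−1} N_k : n = 1,…,N_{2q} }. Then the 2q-th order virtual array S_q of this physical array contains the set of consecutive integers {−(∏_{k=1}^{2q} N_k − 1), …, ∏_{k=1}^{2q} N_k − 1}, i.e., a uniform linear array of size 2∏_{k=0}^{2q} N_k − 1. -/

import Mathlib

/-!
Put `P i = N₁ ⋯ N_i`. Every `0 ≤ m < P (2q)` has a signed mixed-radix expansion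
`m = ∑ⱼ (xⱼ P (2j+1) - yⱼ P (2j))` with digits `1 ≤ xⱼ ≤ N_{2j+2}` and `1 ≤ yⱼ ≤ N_{2j+1}`:
round `m` up to the next multiple `x P (2q-1)`, round the overshoot up to the next multiple
`y P (2q-2)`, and recurse on what is left, which lies in `[0, P (2q-2))`. Each term `x P (i-1)`
with `1 ≤ x ≤ N_i` is an element of the nested array; for `x = N_i` this is because
`N_i P (i-1) = 1 · P i`. Negative `m` follow by exchanging the two sums.
-/

open Finset

def virtualArray (A : Set ℤ) (q : ℕ) : Set ℤ :=
  {m | ∃ f g : Fin q → ℤ, (∀ i, f i ∈ A) ∧ (∀ i, g i ∈ A) ∧ m = (∑ i, f i) - ∑ i, g i}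

def nestedArray (q : ℕ) (N : ℕ → ℕ) : Set ℤ :=
  (⋃ i ∈ Finset.Icc 1 (2 * q - 1),
      {x : ℤ | ∃ n : ℕ, 1 ≤ n ∧ n ≤ N i - 1 ∧ x = (n : ℤ) * ∏ k ∈ Finset.range i, (N k : ℤ)}) ∪
    {x : ℤ | ∃ n : ℕ, 1 ≤ n ∧ n ≤ N (2 * q) ∧
      x = (n : ℤ) * ∏ k ∈ Finset.range (2 * q), (N k : ℤ)}

section VirtualArray

variable {A : Set ℤ} {j : ℕ} {m : ℤ}

theorem zero_mem_virtualArray_zero : (0 : ℤ) ∈ virtualArray A 0 :=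
  ⟨Fin.elim0, Fin.elim0, fun i => i.elim0, fun i => i.elim0, by simp⟩

theorem sub_add_mem_virtualArray_succ {x y : ℤ} (hx : x ∈ A) (hy : y ∈ A)
    (hm : m ∈ virtualArray A j) : x - y + m ∈ virtualArray A (j + 1) := by
  obtain ⟨f, g, hf, hg, rfl⟩ := hm
  refine ⟨Fin.cons x f, Fin.cons y g, Fin.cases hx hf, Fin.cases hy hg, ?_⟩
  rw [Fin.sum_cons, Fin.sum_cons]
  ring

theorem neg_mem_virtualArray (hm : m ∈ virtualArray A j) : -m ∈ virtualArray A j := by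
  obtain ⟨f, g, hf, hg, rfl⟩ := hm
  exact ⟨g, f, hg, hf, by ring⟩

end VirtualArray

/-- The digit `c = a / b + 1` rounds `a` up to the next multiple of `b` strictly above it. -/
theorem Int.exists_mul_sub_mem_Ioc {a b K : ℤ} (hb : 0 < b) (ha : 0 ≤ a) (haK : a < K * b) :
    ∃ c ∈ Set.Icc 1 K, c * b - a ∈ Set.Ioc 0 b := by
  have hdiv := Int.mul_ediv_add_emod a b
  have hmod_nonneg := Int.emod_nonneg a hb.ne'
  have hmod_lt := Int.emod_lt_of_pos a hb
  have hquot_nonneg := Int.ediv_nonneg ha hb.le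
  have hquot_lt : a / b < K := (Int.ediv_lt_iff_lt_mul hb).2 haK
  refine ⟨a / b + 1, ⟨by omega, by omega⟩, ?_⟩
  have hshift : (a / b + 1) * b - a = b - a % b := by linarith
  rw [hshift]
  constructor <;> omega

section MixedRadix

variable {A : Set ℤ} {w M : ℕ → ℤ}

theorem mem_virtualArray_of_nonneg_of_lt (hw0 : w 0 = 1) (hw : ∀ i, w (i + 1) = M i * w i)
    {j : ℕ} (hpos : ∀ i < 2 * j, 0 < w i)
    (hA : ∀ i < 2 * j, ∀ x : ℤ, 1 ≤ x → x ≤ M i → x * w i ∈ A) :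
    ∀ {m : ℤ}, 0 ≤ m → m < w (2 * j) → m ∈ virtualArray A j := by
  induction j with
  | zero =>
    intro m hm0 hm
    rw [Nat.mul_zero, hw0] at hm
    obtain rfl : m = 0 := by omega
    exact zero_mem_virtualArray_zero
  | succ j ih =>
    intro m hm0 hm
    rw [show 2 * (j + 1) = 2 * j + 1 + 1 by ring, hw] at hm
    obtain ⟨x, ⟨hx1, hxM⟩, hs0, hs⟩ :=
      Int.exists_mul_sub_mem_Ioc (hpos (2 * j + 1) (by omega)) hm0 hm
    obtain ⟨y, ⟨hy1, hyM⟩, ht0, ht⟩ := Int.exists_mul_sub_mem_Ioc (K := M (2 * j))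
      (hpos (2 * j) (by omega)) (by omega : 0 ≤ x * w (2 * j + 1) - m - 1) (by rw [← hw]; omega)
    have hrest : y * w (2 * j) - (x * w (2 * j + 1) - m) ∈ virtualArray A j :=
      ih (fun i hi => hpos i (by omega)) (fun i hi => hA i (by omega)) (by omega) (by omega)
    have hx := hA (2 * j + 1) (by omega) x hx1 hxM
    have hy := hA (2 * j) (by omega) y hy1 hyM
    convert sub_add_mem_virtualArray_succ hx hy hrest using 1
    ring

theorem mem_virtualArray_of_abs_lt (hw0 : w 0 = 1) (hw : ∀ i, w (i + 1) = M i * w i)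
    {j : ℕ} (hpos : ∀ i < 2 * j, 0 < w i)
    (hA : ∀ i < 2 * j, ∀ x : ℤ, 1 ≤ x → x ≤ M i → x * w i ∈ A)
    {m : ℤ} (hm : |m| < w (2 * j)) : m ∈ virtualArray A j := by
  rcases le_or_gt 0 m with hm0 | hm0
  · exact mem_virtualArray_of_nonneg_of_lt hw0 hw hpos hA hm0 (by rwa [abs_of_nonneg hm0] at hm)
  · simpa using neg_mem_virtualArray <|
      mem_virtualArray_of_nonneg_of_lt (m := -m) hw0 hw hpos hA (by omega)
        (by rwa [abs_of_neg hm0] at hm)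

end MixedRadix

section NestedArray

variable {q : ℕ} {N : ℕ → ℕ}

theorem natCast_mul_prod_mem_nestedArray (hN : ∀ i, 1 ≤ i → i ≤ 2 * q → 0 < N i)
    {i : ℕ} (hi1 : 1 ≤ i) (hi : i ≤ 2 * q) {x : ℕ} (hx1 : 1 ≤ x) (hx : x ≤ N i) :
    (x : ℤ) * ∏ k ∈ range i, (N k : ℤ) ∈ nestedArray q N := by
  induction hi using Nat.decreasingInduction generalizing x with
  | self => exact Or.inr ⟨x, hx1, hx, rfl⟩
  | of_succ i hi ih =>
    rcases Nat.lt_or_ge x (N i) with hxN | hxN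
    · exact Or.inl <| Set.mem_biUnion (mem_Icc.2 ⟨hi1, by omega⟩) ⟨x, hx1, by omega, rfl⟩
    · obtain rfl : x = N i := by omega
      have hcarry : (N i : ℤ) * ∏ k ∈ range i, (N k : ℤ) =
          ((1 : ℕ) : ℤ) * ∏ k ∈ range (i + 1), (N k : ℤ) := by
        rw [prod_range_succ]; push_cast; ring
      rw [hcarry]
      exact ih (by omega) le_rfl (hN (i + 1) (by omega) hi)

end NestedArray

theorem prod_range_succ_eq_prod_Icc_one {N : ℕ → ℤ} (hN0 : N 0 = 1) (i : ℕ) :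
    ∏ k ∈ range (i + 1), N k = ∏ k ∈ Icc 1 i, N k := by
  rw [Nat.range_succ_eq_Icc_zero, ← insert_Icc_add_one_left_eq_Icc (Nat.zero_le i),
    prod_insert (by simp), hN0, one_mul, zero_add]

theorem nested_array_virtual_ula_general (q : ℕ) (N : ℕ → ℕ)
    (hN0 : N 0 = 1) (hNpos : ∀ i, 1 ≤ i → i ≤ 2 * q → 0 < N i)
    (A : Set ℤ)
    (hA : A = (⋃ i ∈ Finset.Icc 1 (2 * q - 1),
        {x : ℤ | ∃ n : ℕ, 1 ≤ n ∧ n ≤ N i - 1 ∧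
          x = (n : ℤ) * ∏ k ∈ Finset.range i, (N k : ℤ)}) ∪
      {x : ℤ | ∃ n : ℕ, 1 ≤ n ∧ n ≤ N (2 * q) ∧
          x = (n : ℤ) * ∏ k ∈ Finset.range (2 * q), (N k : ℤ)}) :
    ∀ m : ℤ, |m| ≤ (∏ k ∈ Finset.Icc 1 (2 * q), (N k : ℤ)) - 1 →
      ∃ f g : Fin q → ℤ, (∀ i, f i ∈ A) ∧ (∀ i, g i ∈ A) ∧
        m = (∑ i, f i) - ∑ i, g i := by
  intro m hm
  change m ∈ virtualArray A q
  have hprod_pos : ∀ i < 2 * q, 0 < ∏ k ∈ Icc 1 i, (N k : ℤ) := fun i hi =>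
    prod_pos fun k hk => by
      obtain ⟨hk1, hki⟩ := mem_Icc.1 hk
      exact_mod_cast hNpos k hk1 (by omega)
  have hdigit_mem : ∀ i < 2 * q, ∀ x : ℤ, 1 ≤ x → x ≤ N (i + 1) →
      x * ∏ k ∈ Icc 1 i, (N k : ℤ) ∈ A := by
    intro i hi x hx1 hxN
    lift x to ℕ using (by omega)
    rw [← prod_range_succ_eq_prod_Icc_one (N := fun k => (N k : ℤ)) (by simp [hN0]), hA]
    exact natCast_mul_prod_mem_nestedArray hNpos (by omega) (by omega) (by omega) (by omega)
  exact mem_virtualArray_of_abs_lt (w := fun i => ∏ k ∈ Icc 1 i, (N k : ℤ))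
    (M := fun i => N (i + 1)) (by simp) (fun i => by rw [prod_Icc_succ_top (by omega), mul_comm])
    hprod_pos hdigit_mem (by omega)

theorem nested_array_virtual_ula (q : ℕ) (hq : 0 < q) (N : ℕ → ℕ)
    (hN0 : N 0 = 1) (hNpos : ∀ i, 1 ≤ i → i ≤ 2 * q → 0 < N i)
    (A : Set ℤ)
    (hA : A = (⋃ i ∈ Finset.Icc 1 (2 * q - 1),
        {x : ℤ | ∃ n : ℕ, 1 ≤ n ∧ n ≤ N i - 1 ∧
          x = (n : ℤ) * ∏ k ∈ Finset.range i, (N k : ℤ)}) ∪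
      {x : ℤ | ∃ n : ℕ, 1 ≤ n ∧ n ≤ N (2 * q) ∧
          x = (n : ℤ) * ∏ k ∈ Finset.range (2 * q), (N k : ℤ)}) :
    ∀ m : ℤ, |m| ≤ (∏ k ∈ Finset.Icc 1 (2 * q), (N k : ℤ)) - 1 →
      ∃ f g : Fin q → ℤ, (∀ i, f i ∈ A) ∧ (∀ i, g i ∈ A) ∧
        m = (∑ i, f i) - ∑ i, g i :=
  nested_array_virtual_ula_general q N hN0 hNpos A hA
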